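/- arXiv:1908.07138 — 3 statements merged into one kernel-verified Lean document; each statement's English description precedes it below -/
import Mathlib

section
/- For σ ∈ (0,1) and λ > 0, the identity (sin(πσ)/π) ∫₀^∞ s^{σ-1} / ((s^σ + λ e^{iπσ})(s^σ + λ e^{-iπσ})) ds = 1/λ holds. -/
open MeasureTheory Set Complex

/-!
The two conjugate factors multiply to `(s^σ + λ cos πσ)² + (λ sin πσ)²`, so the integral is real.
The substitution `u = s^σ` turns it into `1/σ` times an arctangent integral, worth
`(π/2 - arctan (cot πσ)) / (λ sin πσ) = πσ / (λ sin πσ)`.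
-/

open Real in
theorem integral_Ioi_one_div_add_sq_add_sq (a : ℝ) {b : ℝ} (hb : 0 < b) :
    ∫ y in Ioi (0 : ℝ), 1 / ((y + a) ^ 2 + b ^ 2) = (π / 2 - Real.arctan (a / b)) / b := by
  have hderiv : ∀ y ∈ Ici (0 : ℝ),
      HasDerivAt (fun y ↦ Real.arctan ((y + a) / b) / b) (1 / ((y + a) ^ 2 + b ^ 2)) y := by
    intro y _
    refine ((((hasDerivAt_id' y).add_const a).div_const b).arctan.div_const b).congr_deriv ?_
    field_simp
    ring
  have hlim : Filter.Tendsto (fun y ↦ Real.arctan ((y + a) / b) / b) Filter.atTop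
      (nhds ((π / 2) / b)) :=
    ((tendsto_nhds_of_tendsto_nhdsWithin tendsto_arctan_atTop).comp
      ((Filter.tendsto_atTop_add_const_right _ a Filter.tendsto_id).atTop_div_const hb)).div_const b
  rw [integral_Ioi_of_hasDerivAt_of_nonneg' hderiv (fun y _ ↦ by positivity) hlim]
  simp only [zero_add]
  ring

open Real in
theorem integral_Ioi_rpow_sub_one_div_sq_add_sq {σ : ℝ} (hσ : 0 < σ) (a : ℝ) {b : ℝ}
    (hb : 0 < b) :
    ∫ s in Ioi (0 : ℝ), s ^ (σ - 1) / ((s ^ σ + a) ^ 2 + b ^ 2) =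
      (π / 2 - Real.arctan (a / b)) / (σ * b) := by
  have hsubst := integral_comp_rpow_Ioi_of_pos (g := fun y ↦ 1 / ((y + a) ^ 2 + b ^ 2)) hσ
  simp only [smul_eq_mul, mul_one_div, mul_div_assoc, integral_const_mul] at hsubst
  rw [integral_Ioi_one_div_add_sq_add_sq a hb] at hsubst
  rw [mul_comm σ b, ← div_div, ← hsubst]
  field_simp

open Real in
theorem arctan_cos_div_sin {θ : ℝ} (h0 : 0 < θ) (hθ : θ < π) :
    Real.arctan (Real.cos θ / Real.sin θ) = π / 2 - θ := by
  rw [← inv_div, ← Real.tan_eq_sin_div_cos, ← Real.tan_pi_div_two_sub, Real.arctan_tan] <;> linarith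

theorem add_mul_exp_mul_I_mul_add_mul_exp_neg (x l θ : ℝ) :
    ((x : ℂ) + l * exp (θ * I)) * (x + l * exp (-(θ * I))) =
      (((x + l * Real.cos θ) ^ 2 + (l * Real.sin θ) ^ 2 : ℝ) : ℂ) := by
  rw [← neg_mul, ← ofReal_neg, exp_mul_I, exp_mul_I, ← ofReal_cos, ← ofReal_sin,
    ← ofReal_cos, ← ofReal_sin, Real.cos_neg, Real.sin_neg]
  simp only [ofReal_add, ofReal_pow, ofReal_mul, ofReal_neg]
  linear_combination (-(l : ℂ) ^ 2 * (Real.sin θ : ℂ) ^ 2) * I_sq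

/-- For `σ ∈ (0,1)` and `λ > 0`,
`(sin(πσ)/π) ∫₀^∞ s^{σ-1} / ((s^σ + λ e^{iπσ})(s^σ + λ e^{-iπσ})) ds = 1/λ`. -/
theorem resolvent_kernel_integral_identity
    (σ l : ℝ) (hσ : σ ∈ Set.Ioo (0 : ℝ) 1) (hl : 0 < l) :
    ((Real.sin (Real.pi * σ) / Real.pi : ℝ) : ℂ) *
      ∫ s in Set.Ioi (0 : ℝ),
        ((s ^ (σ - 1) : ℝ) : ℂ) /
          ((((s ^ σ : ℝ) : ℂ) + (l : ℂ) * Complex.exp (Real.pi * σ * Complex.I)) *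
           (((s ^ σ : ℝ) : ℂ) + (l : ℂ) * Complex.exp (-(Real.pi * σ * Complex.I))))
      = 1 / (l : ℂ) := by
  obtain ⟨hσ0, hσ1⟩ := hσ
  have hπσ : Real.pi * σ < Real.pi := by nlinarith [Real.pi_pos]
  have hsin : 0 < Real.sin (Real.pi * σ) :=
    Real.sin_pos_of_pos_of_lt_pi (by positivity) hπσ
  simp_rw [← ofReal_mul, add_mul_exp_mul_I_mul_add_mul_exp_neg, ← ofReal_div,
    integral_complex_ofReal,
    integral_Ioi_rpow_sub_one_div_sq_add_sq hσ0 _ (mul_pos hl hsin), mul_div_mul_left _ _ hl.ne',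
    arctan_cos_div_sin (by positivity) hπσ]
  rw [← ofReal_mul, ← ofReal_one, ← ofReal_div, ofReal_inj]
  field_simp
  ring
end

section
/- For every m > 0 there exists c > 0 such that for all real numbers a, b: (a − b)(|a|^{m-1}a − |b|^{m-1}b) ≥ c (|a|^{(m-1)/2}a − |b|^{(m-1)/2}b)². -/
/-- `signPow e x = |x|^{e-1} x = sign(x) |x|^e`. -/
noncomputable def signPow (e : ℝ) (x : ℝ) : ℝ := |x| ^ (e - 1) * x

lemma signPow_of_nonneg {e x : ℝ} (he : 0 < e) (hx : 0 ≤ x) :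
    signPow e x = x ^ e := by
  unfold signPow
  rcases eq_or_lt_of_le hx with h | h
  · rw [← h, Real.zero_rpow he.ne', mul_zero]
  · rw [abs_of_pos h, ← Real.rpow_add_one h.ne']
    ring_nf

lemma signPow_neg (e x : ℝ) : signPow e (-x) = -signPow e x := by
  unfold signPow
  rw [abs_neg]; ring

/-- Lower bound: `min r 1 * (1 - t) ≤ 1 - t ^ r` for `t ∈ [0,1]`, `r > 0`. -/
lemma pow_lower {r t : ℝ} (hr : 0 < r) (ht0 : 0 ≤ t) (ht1 : t ≤ 1) :
    min r 1 * (1 - t) ≤ 1 - t ^ r := by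
  rcases le_total 1 r with h | h
  · rw [min_eq_right h]
    have : t ^ r ≤ t := by
      rcases eq_or_lt_of_le ht0 with h0 | h0
      · rw [← h0, Real.zero_rpow hr.ne']
      · calc t ^ r ≤ t ^ (1 : ℝ) := Real.rpow_le_rpow_of_exponent_ge h0 ht1 h
          _ = t := Real.rpow_one t
    linarith
  · rw [min_eq_left h]
    have := Real.geom_mean_le_arith_mean2_weighted hr.le (by linarith : (0:ℝ) ≤ 1 - r)
      ht0 (by norm_num : (0:ℝ) ≤ 1) (by ring)
    rw [Real.one_rpow, mul_one, mul_one] at this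
    nlinarith

/-- Upper bound: `1 - t ^ r ≤ max r r⁻¹ * (1 - t)` for `t ∈ [0,1]`, `r > 0`. -/
lemma pow_upper {r t : ℝ} (hr : 0 < r) (ht0 : 0 ≤ t) (ht1 : t ≤ 1) :
    1 - t ^ r ≤ max r r⁻¹ * (1 - t) := by
  rcases le_total 1 r with h | h
  · have hmax : max r r⁻¹ = r := max_eq_left ((inv_le_one_of_one_le₀ h).trans h)
    rw [hmax]
    have hber := one_add_mul_self_le_rpow_one_add (s := t - 1) (by linarith) h
    have : (1 : ℝ) + (t - 1) = t := by ring
    rw [this] at hber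
    nlinarith
  · have hr1 : 1 ≤ r⁻¹ := one_le_inv₀ hr |>.mpr h
    have hmax : max r r⁻¹ = r⁻¹ := max_eq_right (h.trans hr1)
    rw [hmax]
    have htr : t ≤ t ^ r := by
      rcases eq_or_lt_of_le ht0 with h0 | h0
      · rw [← h0, Real.zero_rpow hr.ne']
      · calc t = t ^ (1 : ℝ) := (Real.rpow_one t).symm
          _ ≤ t ^ r := Real.rpow_le_rpow_of_exponent_ge h0 ht1 h
    have htp1 : t ^ r ≤ 1 := Real.rpow_le_one ht0 ht1 hr.le
    nlinarith [mul_le_of_le_one_left (by linarith : (0:ℝ) ≤ 1 - t ^ r) h,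
      (le_of_lt (lt_of_lt_of_le one_pos hr1) : (0:ℝ) ≤ r⁻¹)]

lemma sq_rpow_half {m p x : ℝ} (hm : 0 < m) (hp : p = (m + 1) / 2) (hx : 0 ≤ x) :
    x ^ p * x ^ p = x * x ^ m := by
  have hp0 : 0 < p := by rw [hp]; linarith
  rcases eq_or_lt_of_le hx with h | h
  · rw [← h]
    simp [Real.zero_rpow hp0.ne', Real.zero_rpow hm.ne']
  · rw [← Real.rpow_add h, show p + p = m + 1 by rw [hp]; ring,
      Real.rpow_add_one h.ne' m, mul_comm]

/-- Key inequality for `0 ≤ b ≤ a`. -/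
lemma key_nonneg {m p : ℝ} (hm : 0 < m) (hp : p = (m + 1) / 2)
    {a b : ℝ} (hb : 0 ≤ b) (hba : b ≤ a) :
    min m 1 / (max p p⁻¹) ^ 2 * (a ^ p - b ^ p) ^ 2 ≤ (a - b) * (a ^ m - b ^ m) := by
  have hp0 : 0 < p := by rw [hp]; linarith
  have hK : 0 < max p p⁻¹ := lt_max_of_lt_left hp0
  have hmin : 0 < min m 1 := lt_min hm one_pos
  have ha : 0 ≤ a := hb.trans hba
  rcases eq_or_lt_of_le ha with h0 | h0
  · have hb0 : b = 0 := le_antisymm (by linarith) hb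
    rw [← h0, hb0]
    norm_num
  · -- a > 0, set t = b / a
    set t := b / a with htdef
    have ht0 : 0 ≤ t := div_nonneg hb h0.le
    have ht1 : t ≤ 1 := (div_le_one h0).mpr hba
    have hbt : b = t * a := (div_mul_cancel₀ b h0.ne').symm
    have hbm : b ^ m = t ^ m * a ^ m := by rw [hbt, Real.mul_rpow ht0 h0.le]
    have hbp : b ^ p = t ^ p * a ^ p := by rw [hbt, Real.mul_rpow ht0 h0.le]
    have hL := pow_lower hm ht0 ht1
    have hU := pow_upper hp0 ht0 ht1
    have htp1 : t ^ p ≤ 1 := Real.rpow_le_one ht0 ht1 hp0.le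
    -- core scalar inequality
    have core : min m 1 / (max p p⁻¹) ^ 2 * (1 - t ^ p) ^ 2 ≤ (1 - t) * (1 - t ^ m) := by
      have h1 : (1 - t ^ p) ^ 2 ≤ (max p p⁻¹) ^ 2 * (1 - t) ^ 2 := by
        have := mul_self_le_mul_self (by linarith) hU
        nlinarith
      have h2 : min m 1 * (1 - t) ^ 2 ≤ (1 - t) * (1 - t ^ m) := by
        nlinarith [mul_le_mul_of_nonneg_left hL (by linarith : (0:ℝ) ≤ 1 - t)]
      calc min m 1 / (max p p⁻¹) ^ 2 * (1 - t ^ p) ^ 2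
          ≤ min m 1 / (max p p⁻¹) ^ 2 * ((max p p⁻¹) ^ 2 * (1 - t) ^ 2) := by
            apply mul_le_mul_of_nonneg_left h1; positivity
        _ = min m 1 * (1 - t) ^ 2 := by field_simp
        _ ≤ (1 - t) * (1 - t ^ m) := h2
    -- scale back
    have hsq : a ^ p * a ^ p = a * a ^ m := sq_rpow_half hm hp ha
    calc min m 1 / (max p p⁻¹) ^ 2 * (a ^ p - b ^ p) ^ 2
        = a ^ p * a ^ p * (min m 1 / (max p p⁻¹) ^ 2 * (1 - t ^ p) ^ 2) := by
          rw [hbp]; ring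
      _ ≤ a ^ p * a ^ p * ((1 - t) * (1 - t ^ m)) :=
          mul_le_mul_of_nonneg_left core (by positivity)
      _ = a * a ^ m * ((1 - t) * (1 - t ^ m)) := by rw [hsq]
      _ = (a - b) * (a ^ m - b ^ m) := by rw [hbm, hbt]; ring

/-- Key inequality for opposite signs. -/
lemma key_mixed {m p : ℝ} (hm : 0 < m) (hp : p = (m + 1) / 2)
    {a b : ℝ} (ha : 0 ≤ a) (hb : 0 ≤ b) :
    (1 / 2 : ℝ) * (a ^ p + b ^ p) ^ 2 ≤ (a + b) * (a ^ m + b ^ m) := by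
  have h1 : a ^ p * a ^ p = a * a ^ m := sq_rpow_half hm hp ha
  have h2 : b ^ p * b ^ p = b * b ^ m := sq_rpow_half hm hp hb
  have h3 : 0 ≤ a ^ m := Real.rpow_nonneg ha m
  have h4 : 0 ≤ b ^ m := Real.rpow_nonneg hb m
  nlinarith [sq_nonneg (a ^ p - b ^ p), mul_nonneg ha h4, mul_nonneg hb h3]

/-- For every `m > 0` there exists `c > 0` such that for all `a, b ∈ ℝ`:
`(a - b)(|a|^{m-1} a - |b|^{m-1} b) ≥ c (|a|^{(m-1)/2} a - |b|^{(m-1)/2} b)²`. -/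
theorem signPow_monotonicity_quantitative (m : ℝ) (hm : 0 < m) :
    ∃ c : ℝ, 0 < c ∧ ∀ a b : ℝ,
      c * (signPow ((m + 1) / 2) a - signPow ((m + 1) / 2) b) ^ 2
        ≤ (a - b) * (signPow m a - signPow m b) := by
  set p := (m + 1) / 2 with hpdef
  have hp0 : 0 < p := by rw [hpdef]; linarith
  have hK : 0 < max p p⁻¹ := lt_max_of_lt_left hp0
  have hmin : 0 < min m 1 := lt_min hm one_pos
  set c0 : ℝ := min m 1 / (max p p⁻¹) ^ 2 with hc0def
  have hc0 : 0 < c0 := by positivity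
  refine ⟨min c0 (1 / 2), lt_min hc0 (by norm_num), ?_⟩
  have hcle0 : min c0 (1 / 2) ≤ c0 := min_le_left _ _
  have hcle2 : min c0 (1 / 2) ≤ 1 / 2 := min_le_right _ _
  -- main claim for b ≤ a
  have main : ∀ a b : ℝ, b ≤ a →
      min c0 (1 / 2) * (signPow p a - signPow p b) ^ 2
        ≤ (a - b) * (signPow m a - signPow m b) := by
    intro a b hba
    rcases le_total 0 b with hb | hb
    · -- 0 ≤ b ≤ a
      have ha : 0 ≤ a := hb.trans hba
      rw [signPow_of_nonneg hp0 ha, signPow_of_nonneg hp0 hb,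
        signPow_of_nonneg hm ha, signPow_of_nonneg hm hb]
      have hkey := key_nonneg hm hpdef hb hba
      have : min c0 (1 / 2) * (a ^ p - b ^ p) ^ 2 ≤ c0 * (a ^ p - b ^ p) ^ 2 :=
        mul_le_mul_of_nonneg_right hcle0 (sq_nonneg _)
      linarith
    · rcases le_total a 0 with ha | ha
      · -- b ≤ a ≤ 0 : use negation
        have h1 : (0:ℝ) ≤ -a := by linarith
        have h2 : -a ≤ -b := by linarith
        have hkey := key_nonneg hm hpdef h1 h2
        have e1 : signPow p a = -(-a) ^ p := by
          rw [← signPow_of_nonneg hp0 h1, ← signPow_neg, neg_neg]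
        have e2 : signPow p b = -(-b) ^ p := by
          rw [← signPow_of_nonneg hp0 (by linarith : (0:ℝ) ≤ -b), ← signPow_neg, neg_neg]
        have e3 : signPow m a = -(-a) ^ m := by
          rw [← signPow_of_nonneg hm h1, ← signPow_neg, neg_neg]
        have e4 : signPow m b = -(-b) ^ m := by
          rw [← signPow_of_nonneg hm (by linarith : (0:ℝ) ≤ -b), ← signPow_neg, neg_neg]
        rw [e1, e2, e3, e4]
        have hsq : (-(-a) ^ p - -(-b) ^ p) ^ 2 = ((-b) ^ p - (-a) ^ p) ^ 2 := by ring
        have hrhs : (a - b) * (-(-a) ^ m - -(-b) ^ m)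
            = (-b - -a) * ((-b) ^ m - (-a) ^ m) := by ring
        rw [hsq, hrhs]
        have : min c0 (1 / 2) * ((-b) ^ p - (-a) ^ p) ^ 2
            ≤ c0 * ((-b) ^ p - (-a) ^ p) ^ 2 :=
          mul_le_mul_of_nonneg_right hcle0 (sq_nonneg _)
        linarith
      · -- b ≤ 0 ≤ a : mixed signs
        have hb' : (0:ℝ) ≤ -b := by linarith
        have hkey := key_mixed hm hpdef ha hb'
        have e1 : signPow p b = -(-b) ^ p := by
          rw [← signPow_of_nonneg hp0 hb', ← signPow_neg, neg_neg]
        have e2 : signPow m b = -(-b) ^ m := by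
          rw [← signPow_of_nonneg hm hb', ← signPow_neg, neg_neg]
        rw [signPow_of_nonneg hp0 ha, signPow_of_nonneg hm ha, e1, e2]
        have hsq : (a ^ p - -(-b) ^ p) ^ 2 = (a ^ p + (-b) ^ p) ^ 2 := by ring
        have hrhs : (a - b) * (a ^ m - -(-b) ^ m)
            = (a + -b) * (a ^ m + (-b) ^ m) := by ring
        rw [hsq, hrhs]
        have : min c0 (1 / 2) * (a ^ p + (-b) ^ p) ^ 2
            ≤ (1 / 2) * (a ^ p + (-b) ^ p) ^ 2 :=
          mul_le_mul_of_nonneg_right hcle2 (sq_nonneg _)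
        linarith
  intro a b
  rcases le_total b a with h | h
  · exact main a b h
  · have h2 := main b a h
    have e1 : (signPow p a - signPow p b) ^ 2 = (signPow p b - signPow p a) ^ 2 := by ring
    have e2 : (a - b) * (signPow m a - signPow m b)
        = (b - a) * (signPow m b - signPow m a) := by ring
    rw [e1, e2]
    exact h2
end

section
/- Uniqueness via the Oleinik test-function trick: Let H be a Hilbert space, D a closed densely defined operator from H₀ to H with adjoint pairing, and suppose u, ũ : [0,T] → H₀ and v = Φ(u), ṽ = Φ(ũ) satisfy ∫₀^T ⟨D(v−ṽ)(t), ∫_t^T D(v−ṽ)(s) ds⟩ dt + ∫₀^T ⟨(u−ũ)(t), (v−ṽ)(t)⟩ dt = 0, where ⟨(u−ũ)(t), (v−ṽ)(t)⟩ ≥ 0 pointwise by monotonicity of Φ. Then u = ũ a.e. in t and space. -/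
open MeasureTheory

lemma signPow_eq (e : ℝ) (he : 0 < e) (x : ℝ) :
    signPow e x = if 0 ≤ x then x ^ e else -((-x) ^ e) := by
  unfold signPow
  rcases le_or_gt 0 x with h | h
  · rw [if_pos h, abs_of_nonneg h]
    rcases eq_or_lt_of_le h with h0 | h0
    · simp [← h0, Real.zero_rpow (ne_of_gt he)]
    · rw [← Real.rpow_add_one h0.ne' (e-1)]; norm_num
  · rw [if_neg (not_le.mpr h), abs_of_neg h]
    have h0 : 0 < -x := by linarith
    rw [show (-x) ^ e = (-x) ^ (e-1) * (-x) by
      rw [← Real.rpow_add_one h0.ne' (e-1)]; norm_num]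
    ring

lemma signPow_strictMono (e : ℝ) (he : 0 < e) : StrictMono (signPow e) := by
  intro x y hxy
  rw [signPow_eq e he, signPow_eq e he]
  rcases le_or_gt 0 x with hx | hx <;> rcases le_or_gt 0 y with hy | hy
  · rw [if_pos hx, if_pos hy]; exact Real.rpow_lt_rpow hx hxy he
  · linarith
  · rw [if_neg (not_le.mpr hx), if_pos hy]
    have : 0 < (-x) ^ e := Real.rpow_pos_of_pos (by linarith) e
    have : 0 ≤ y ^ e := Real.rpow_nonneg hy e
    linarith
  · rw [if_neg (not_le.mpr hx), if_neg (not_le.mpr hy)]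
    have := Real.rpow_lt_rpow (by linarith : (0:ℝ) ≤ -y) (by linarith : -y < -x) he
    linarith

lemma signPow_mul_nonneg (e : ℝ) (he : 0 < e) (x y : ℝ) :
    0 ≤ (x - y) * (signPow e x - signPow e y) := by
  rcases lt_trichotomy x y with h | h | h
  · have := signPow_strictMono e he h
    nlinarith
  · simp [h]
  · have := signPow_strictMono e he h
    nlinarith

lemma signPow_mul_eq_zero (e : ℝ) (he : 0 < e) {x y : ℝ}
    (h : (x - y) * (signPow e x - signPow e y) = 0) : x = y := by
  by_contra hne
  rcases lt_or_gt_of_ne hne with hlt | hlt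
  · have := signPow_strictMono e he hlt
    nlinarith
  · have := signPow_strictMono e he hlt
    nlinarith

/-- Uniqueness via the Oleinik test-function trick.  Let `Φ(x) = |x|^{m-1} x` with `m > 0`,
and let `u, ũ` be two functions on `(0,T) × Ω`.  Suppose
`A + ∫∫ (u - ũ)(Φ(u) - Φ(ũ)) = 0` where `A ≥ 0` represents the (nonnegative) term
`∫₀^T ⟪D(Φu - Φũ)(t), ∫_t^T D(Φu - Φũ)(s) ds⟫ dt = (1/2)‖∫₀^T D(Φu - Φũ)‖²`.
Then `u = ũ` a.e. in time and space. -/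
theorem oleinik_uniqueness_trick
    {Ω : Type*} [MeasurableSpace Ω] (μ : Measure Ω)
    (m : ℝ) (hm : 0 < m) (T : ℝ) (hT : 0 < T)
    (u utilde : ℝ → Ω → ℝ) (A : ℝ) (hA : 0 ≤ A)
    (hInt : Integrable
      (fun p : ℝ × Ω =>
        (u p.1 p.2 - utilde p.1 p.2) * (signPow m (u p.1 p.2) - signPow m (utilde p.1 p.2)))
      ((volume.restrict (Set.Ioc 0 T)).prod μ))
    (hsum : A + ∫ p : ℝ × Ω,
        (u p.1 p.2 - utilde p.1 p.2) * (signPow m (u p.1 p.2) - signPow m (utilde p.1 p.2))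
          ∂((volume.restrict (Set.Ioc 0 T)).prod μ) = 0) :
    ∀ᵐ p : ℝ × Ω ∂((volume.restrict (Set.Ioc 0 T)).prod μ),
      u p.1 p.2 = utilde p.1 p.2 := by
  set ν := (volume.restrict (Set.Ioc 0 T)).prod μ
  set g := fun p : ℝ × Ω =>
      (u p.1 p.2 - utilde p.1 p.2) * (signPow m (u p.1 p.2) - signPow m (utilde p.1 p.2))
  have hnn : ∀ p, 0 ≤ g p := fun p => signPow_mul_nonneg m hm _ _
  have hint_nonneg : 0 ≤ ∫ p, g p ∂ν := integral_nonneg hnn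
  have hzero : ∫ p, g p ∂ν = 0 := le_antisymm (by linarith) hint_nonneg
  have hae : g =ᵐ[ν] 0 :=
    (integral_eq_zero_iff_of_nonneg hnn hInt).mp hzero
  filter_upwards [hae] with p hp
  exact signPow_mul_eq_zero m hm hp
end
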